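/- Let Ω' ⊂ ℝⁿ be open and bounded, f smooth on a neighborhood of the closure of Ω' with ∇f ≠ 0 on the closure, and g smooth on a neighborhood of the closure. Then for every compact set K ⊂ Ω' there exists ε > 0 and a diffeomorphism Φ from K onto its image in Ω' such that (f + εg)∘Φ = f on K. -/

import Mathlib

open Real Set Metric Topology RealInnerProductSpace

section Aux

lemma tube_bound {α β γ : Type*} [MetricSpace α] [MetricSpace β] [ProperSpace β] [MetricSpace γ]
    {C : Set α} (hC : IsCompact C) (b₀ : β) {O : Set (α × β)} (hO : IsOpen O)
    (hCO : ∀ x ∈ C, (x, b₀) ∈ O) {u : α × β → γ} (hu : ContinuousOn u O)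
    {η : ℝ} (hη : 0 < η) :
    ∃ δ > 0, ∀ x ∈ C, ∀ b : β, dist b b₀ ≤ δ →
      (x, b) ∈ O ∧ dist (u (x, b)) (u (x, b₀)) ≤ η := by
  obtain ⟨V, W, hV, hW, hCV, hbW, hVW⟩ :=
    generalized_tube_lemma hC (isCompact_singleton (x := b₀)) hO
      (by rintro ⟨x, b⟩ ⟨hx, hb⟩; rcases hb with rfl; exact hCO x hx)
  obtain ⟨δ₁, hδ₁, hball⟩ := Metric.isOpen_iff.1 hW b₀ (hbW rfl)
  set C' : Set (α × β) := C ×ˢ (closedBall b₀ (δ₁ / 2)) with hC'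
  have hC'c : IsCompact C' := hC.prod (isCompact_closedBall _ _)
  have hC'O : C' ⊆ O := by
    rintro ⟨x, b⟩ ⟨hx, hb⟩
    rw [mem_closedBall] at hb
    exact hVW ⟨hCV hx, hball (by rw [mem_ball]; linarith)⟩
  have huc : UniformContinuousOn u C' :=
    hC'c.uniformContinuousOn_of_continuous (hu.mono hC'O)
  rw [Metric.uniformContinuousOn_iff] at huc
  obtain ⟨δ₂, hδ₂, hδ₂'⟩ := huc η hη
  refine ⟨min (δ₁ / 2) (δ₂ / 2), by positivity, fun x hx b hb => ?_⟩
  have hb1 : dist b b₀ ≤ δ₁ / 2 := le_trans hb (min_le_left _ _)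
  have hmem : (x, b) ∈ C' := ⟨hx, hb1⟩
  have hmem0 : (x, b₀) ∈ C' := ⟨hx, by simp [mem_closedBall]; positivity⟩
  refine ⟨hC'O hmem, ?_⟩
  have : dist ((x, b) : α × β) (x, b₀) < δ₂ := by
    rw [Prod.dist_eq]
    simp only [dist_self]
    have : dist b b₀ ≤ δ₂ / 2 := le_trans hb (min_le_right _ _)
    exact lt_of_le_of_lt (max_le (by linarith [hδ₂]) this) (by linarith)
  exact (hδ₂' _ hmem _ hmem0 this).le

lemma clm_equiv_of_injective {E : Type*} [NormedAddCommGroup E] [NormedSpace ℝ E]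
    [FiniteDimensional ℝ E] (A : E →L[ℝ] E) (h : Function.Injective A) :
    ∃ e : E ≃L[ℝ] E, (e : E →L[ℝ] E) = A := by
  have hbij : Function.Bijective (A : E →ₗ[ℝ] E) :=
    ⟨h, (LinearMap.injective_iff_surjective).1 h⟩
  let e₀ := LinearEquiv.ofBijective (A : E →ₗ[ℝ] E) hbij
  refine ⟨e₀.toContinuousLinearEquiv, ?_⟩
  ext x
  rfl

lemma clm_injective_of_close_id {E : Type*} [NormedAddCommGroup E] [NormedSpace ℝ E]
    (A : E →L[ℝ] E) (h : ‖A - ContinuousLinearMap.id ℝ E‖ ≤ 1/2) : Function.Injective A := by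
  intro a b hab
  have h1 : A (a - b) = 0 := by rw [map_sub, hab, sub_self]
  by_contra hne
  have h2 : ‖a - b‖ ≤ (1/2) * ‖a - b‖ := by
    have h4 := (A - ContinuousLinearMap.id ℝ E).le_opNorm (a - b)
    simp only [ContinuousLinearMap.sub_apply, ContinuousLinearMap.id_apply, h1, zero_sub,
      norm_neg] at h4
    calc ‖a - b‖ ≤ ‖A - ContinuousLinearMap.id ℝ E‖ * ‖a - b‖ := h4
    _ ≤ (1/2) * ‖a - b‖ := mul_le_mul_of_nonneg_right h (norm_nonneg _)
  have h3 : 0 < ‖a - b‖ := by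
    rw [norm_pos_iff]
    exact sub_ne_zero.2 fun hh => hne hh
  linarith

end Aux

set_option maxHeartbeats 2000000 in
theorem moser_aux {E : Type*} [NormedAddCommGroup E] [InnerProductSpace ℝ E]
    [FiniteDimensional ℝ E] (Ω' U : Set E)
    (hΩo : IsOpen Ω') (hΩb : Bornology.IsBounded Ω')
    (hU : IsOpen U) (hcl : closure Ω' ⊆ U)
    (f g : E → ℝ)
    (hf : ContDiffOn ℝ (⊤ : ℕ∞) f U) (hg : ContDiffOn ℝ (⊤ : ℕ∞) g U)
    (hcrit : ∀ x ∈ closure Ω', fderiv ℝ f x ≠ 0)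
    (K : Set E) (hK : IsCompact K) (hKΩ : K ⊆ Ω') :
    ∃ ε : ℝ, 0 < ε ∧
      ∃ Φ : PartialHomeomorph E E,
        K ⊆ Φ.source ∧ Φ '' K ⊆ Ω' ∧
        ContDiffOn ℝ (⊤ : ℕ∞) Φ Φ.source ∧ ContDiffOn ℝ (⊤ : ℕ∞) Φ.symm Φ.target ∧
        ∀ x ∈ K, f (Φ x) + ε * g (Φ x) = f x := by
  classical
  rcases K.eq_empty_or_nonempty with rfl | hKne
  · refine ⟨1, one_pos, PartialHomeomorph.refl E, by simp, by simp, ?_, ?_, by simp⟩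
    · simpa using contDiffOn_id
    · simpa using contDiffOn_id
  have hΩU : Ω' ⊆ U := subset_closure.trans hcl
  -- smoothness of the derivative of f
  have hfderiv : ContDiffOn ℝ (⊤ : ℕ∞) (fderiv ℝ f) U := by
    have h1 : ContDiffOn ℝ (⊤ : ℕ∞) (fderivWithin ℝ f U) U :=
      hf.fderivWithin hU.uniqueDiffOn (by simp)
    exact h1.congr fun x hx => (fderivWithin_of_isOpen hU hx).symm
  -- the open set where the derivative does not vanish
  set V : Set E := U ∩ (fderiv ℝ f) ⁻¹' ({0}ᶜ) with hV_def
  have hVopen : IsOpen V :=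
    hfderiv.continuousOn.isOpen_inter_preimage hU isOpen_compl_singleton
  have hclV : closure Ω' ⊆ V := fun x hx => ⟨hcl hx, by simpa using hcrit x hx⟩
  have hΩV : Ω' ⊆ V := subset_closure.trans hclV
  -- the pseudo-gradient vector field
  set w : E → E := fun x => (InnerProductSpace.toDual ℝ E).symm (fderiv ℝ f x) with hw_def
  have hw : ContDiffOn ℝ (⊤ : ℕ∞) w U := by
    have := ((InnerProductSpace.toDual ℝ E).symm.toContinuousLinearEquiv.comp_contDiffOn_iff
      (f := fun x => fderiv ℝ f x) (s := U)).2 hfderiv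
    exact this.congr fun x hx => by simp [hw_def]
  set a : E → ℝ := fun x => fderiv ℝ f x (w x) with ha_def
  have ha : ContDiffOn ℝ (⊤ : ℕ∞) a U := hfderiv.clm_apply hw
  have haw : ∀ x, a x = ‖w x‖^2 := by
    intro x
    have h1 : ⟪w x, w x⟫ = fderiv ℝ f x (w x) := InnerProductSpace.toDual_symm_apply
    rw [ha_def]
    simp only [← h1]
    rw [real_inner_self_eq_norm_sq]
  have hane : ∀ x ∈ V, a x ≠ 0 := by
    intro x hx
    rw [haw x]
    have hwne : w x ≠ 0 := by
      simp only [hw_def, ne_eq, LinearIsometryEquiv.map_eq_zero_iff]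
      exact hx.2
    exact pow_ne_zero 2 (norm_ne_zero_iff.2 hwne)
  set v : E → E := fun x => (a x)⁻¹ • w x with hv_def
  have hv : ContDiffOn ℝ (⊤ : ℕ∞) v V :=
    ((ha.mono inter_subset_left).inv hane).smul (hw.mono inter_subset_left)
  have hvprop : ∀ x ∈ V, fderiv ℝ f x (v x) = 1 := by
    intro x hx
    simp only [hv_def, map_smul, smul_eq_mul]
    exact inv_mul_cancel₀ (hane x hx)
  -- the radius r
  obtain ⟨r₀, hr₀, hrsub⟩ := hK.exists_cthickening_subset_open hΩo hKΩ
  set r : ℝ := r₀ / 4 with hr_def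
  have hr : 0 < r := by positivity
  set T1 : Set E := thickening r K with hT1_def
  set T3 : Set E := thickening (3*r) K with hT3_def
  set C2 : Set E := cthickening (2*r) K with hC2_def
  set C3 : Set E := cthickening (3*r) K with hC3_def
  have hKT1 : K ⊆ T1 := self_subset_thickening hr K
  have hT1C2 : T1 ⊆ C2 := thickening_subset_cthickening_of_le (by linarith) K
  have hC2T3 : C2 ⊆ T3 := cthickening_subset_thickening' (by linarith) (by linarith) K
  have hT3C3 : T3 ⊆ C3 := thickening_subset_cthickening _ K
  have hC3Ω : C3 ⊆ Ω' := le_trans (cthickening_mono (by linarith) K) hrsub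
  have hT1open : IsOpen T1 := isOpen_thickening
  have hT3open : IsOpen T3 := isOpen_thickening
  have hC2comp : IsCompact C2 := hK.cthickening
  have hC3comp : IsCompact C3 := hK.cthickening
  have hT1C3 : T1 ⊆ C3 := hT1C2.trans (hC2T3.trans hT3C3)
  have hC2C3 : C2 ⊆ C3 := hC2T3.trans hT3C3
  have hT1T3 : T1 ⊆ T3 := hT1C2.trans hC2T3
  -- nearby points of T1 are in C2
  have hseg : ∀ x ∈ T1, ∀ y : E, dist y x ≤ r → y ∈ C2 := by
    intro x hx y hy
    rw [hT1_def, mem_thickening_iff] at hx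
    obtain ⟨k, hk, hdk⟩ := hx
    apply thickening_subset_cthickening _ K
    rw [mem_thickening_iff]
    exact ⟨k, hk, by calc dist y k ≤ dist y x + dist x k := dist_triangle _ _ _
      _ < 2 * r := by linarith⟩
  -- bounds on v and g on C3
  clear_value r
  obtain ⟨Mv₀, hMv₀⟩ := hC3comp.exists_bound_of_continuousOn
    ((hv.continuousOn).mono (hC3Ω.trans hΩV))
  obtain ⟨Mg₀, hMg₀⟩ := hC3comp.exists_bound_of_continuousOn
    ((hg.continuousOn).mono (hC3Ω.trans hΩU))
  set Mv : ℝ := |Mv₀| + 1 with hMv_def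
  set Mg : ℝ := |Mg₀| + 1 with hMg_def
  have hMvpos : 0 < Mv := by positivity
  have hMgpos : 0 < Mg := by positivity
  have hMv : ∀ x ∈ C3, ‖v x‖ ≤ Mv := fun x hx =>
    (hMv₀ x hx).trans (by rw [hMv_def]; cases abs_cases Mv₀ <;> linarith)
  have hMg : ∀ x ∈ C3, |g x| ≤ Mg := fun x hx =>
    le_trans (by simpa using hMg₀ x hx) (by rw [hMg_def]; cases abs_cases Mg₀ <;> linarith)
  clear_value Mv Mg
  -- the function G and the map Wm
  set m : E × ℝ × ℝ → E := fun p => p.1 + p.2.1 • v p.1 with hm_def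
  set G : E × ℝ × ℝ → ℝ := fun p => f (m p) + p.2.2 * g (m p) - f p.1 with hG_def
  set D : Set (E × ℝ × ℝ) := {p | p.1 ∈ Ω' ∧ m p ∈ Ω'} with hD_def
  have hmcont : ContDiffOn ℝ (⊤ : ℕ∞) m (Ω' ×ˢ (univ : Set (ℝ × ℝ))) := by
    apply ContDiffOn.add
    · exact contDiff_fst.contDiffOn
    · exact (contDiff_snd.fst.contDiffOn).smul
        (hv.comp (contDiff_fst.contDiffOn) (fun p hp => hΩV hp.1))
  have hDopen : IsOpen D := by
    have hDeq : D = (Ω' ×ˢ (univ : Set (ℝ × ℝ))) ∩ m ⁻¹' Ω' := by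
      ext p; simp [hD_def]
    rw [hDeq]
    exact hmcont.continuousOn.isOpen_inter_preimage (hΩo.prod isOpen_univ) hΩo
  have hDsub : D ⊆ Ω' ×ˢ (univ : Set (ℝ × ℝ)) := fun p hp => ⟨hp.1, trivial⟩
  have hmD : ContDiffOn ℝ (⊤ : ℕ∞) m D := hmcont.mono hDsub
  have hGsmooth : ContDiffOn ℝ (⊤ : ℕ∞) G D := by
    apply ContDiffOn.sub
    · apply ContDiffOn.add
      · exact hf.comp hmD (fun p hp => hΩU hp.2)
      · exact (contDiff_snd.snd.contDiffOn).mul (hg.comp hmD (fun p hp => hΩU hp.2))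
    · exact hf.comp (contDiff_fst.contDiffOn) (fun p hp => hΩU hp.1)
  set Wm : E × ℝ × ℝ → E × ℝ × ℝ := fun p => (p.1, G p, p.2.2) with hWm_def
  have hWsmooth : ContDiffOn ℝ (⊤ : ℕ∞) Wm D :=
    (contDiff_fst.contDiffOn).prodMk (hGsmooth.prodMk (contDiff_snd.snd.contDiffOn))
  -- q : the t-partial derivative of G
  set q : E × ℝ × ℝ → ℝ := fun p => fderiv ℝ G p ((0 : E), (1 : ℝ), (0 : ℝ)) with hq_def
  have hqcont : ContinuousOn q D :=
    (hGsmooth.continuousOn_fderiv_of_isOpen hDopen (by simp)).clm_apply continuousOn_const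
  have hGdiff : ∀ p ∈ D, HasFDerivAt G (fderiv ℝ G p) p := by
    intro p hp
    exact ((hGsmooth.differentiableOn (by simp)).differentiableAt
      (hDopen.mem_nhds hp)).hasFDerivAt
  have hqt : ∀ p ∈ D, HasDerivAt (fun s => G (p.1, s, p.2.2)) (q p) p.2.1 := by
    intro p hp
    have hc : HasDerivAt (fun s : ℝ => ((p.1, s, p.2.2) : E × ℝ × ℝ))
        (((0 : E), (1 : ℝ), (0 : ℝ)) : E × ℝ × ℝ) p.2.1 :=
      (hasDerivAt_const _ _).prodMk ((hasDerivAt_id _).prodMk (hasDerivAt_const _ _))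
    exact (hGdiff p hp).comp_hasDerivAt p.2.1 hc
  have hmem0 : ∀ x ∈ Ω', ((x, (0:ℝ), (0:ℝ)) : E × ℝ × ℝ) ∈ D := by
    intro x hx
    refine ⟨hx, ?_⟩
    simpa [hm_def] using hx
  have hq1 : ∀ x ∈ Ω', q (x, (0:ℝ), (0:ℝ)) = 1 := by
    intro x hx
    have hin : HasDerivAt (fun s : ℝ => x + s • v x) (v x) 0 := by
      simpa using ((hasDerivAt_id (0:ℝ)).smul_const (v x)).const_add x
    have hfd : DifferentiableAt ℝ f x :=
      (hf.differentiableOn (by simp)).differentiableAt (hU.mem_nhds (hΩU hx))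
    have hcomp : HasDerivAt (fun s : ℝ => f (x + s • v x)) (fderiv ℝ f x (v x)) 0 := by
      have hfd' : HasFDerivAt f (fderiv ℝ f x) ((fun s : ℝ => x + s • v x) 0) := by
        simpa using hfd.hasFDerivAt
      exact hfd'.comp_hasDerivAt 0 hin
    have heq : (fun s : ℝ => G (x, s, (0:ℝ))) = fun s : ℝ => f (x + s • v x) - f x := by
      funext s
      simp [hG_def, hm_def]
    have h2 : HasDerivAt (fun s : ℝ => G (x, s, (0:ℝ))) (fderiv ℝ f x (v x)) 0 := by
      rw [heq]
      simpa using hcomp.sub_const (f x)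
    have h3 := hqt (x, (0:ℝ), (0:ℝ)) (hmem0 x hx)
    have h4 := h3.unique h2
    rw [hq_def] at h4 ⊢
    rw [h4, hvprop x (hΩV hx)]
  -- tube bound 1 : q ≥ 1/2 on a uniform tube around C3 × {0}
  obtain ⟨δ, hδpos, hδ⟩ := tube_bound (β := ℝ × ℝ) hC3comp ((0:ℝ), (0:ℝ)) hDopen
    (fun x hx => hmem0 x (hC3Ω hx)) hqcont one_half_pos
  have hQ : ∀ x ∈ C3, ∀ t e : ℝ, |t| ≤ δ → |e| ≤ δ →
      ((x, t, e) : E × ℝ × ℝ) ∈ D ∧ 1/2 ≤ q (x, t, e) := by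
    intro x hx t e ht he
    have hdist : dist ((t, e) : ℝ × ℝ) (((0:ℝ), (0:ℝ)) : ℝ × ℝ) ≤ δ := by
      rw [Prod.dist_eq]
      simp only [Real.dist_eq, sub_zero]
      exact max_le ht he
    obtain ⟨hmem, hd⟩ := hδ x hx (t, e) hdist
    refine ⟨hmem, ?_⟩
    rw [Real.dist_eq, hq1 x (hC3Ω hx)] at hd
    rw [abs_le] at hd
    linarith [hd.1]
  -- choice of ε₁
  set ε₁ : ℝ := min δ (δ / (4 * Mg)) with hε₁_def
  have hε₁pos : 0 < ε₁ := lt_min hδpos (by positivity)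
  have hε₁δ : ε₁ ≤ δ := min_le_left _ _
  have hε₁Mg : 2 * ε₁ * Mg ≤ δ / 2 := by
    have h1 : ε₁ ≤ δ / (4 * Mg) := min_le_right _ _
    have h2 : 2 * ε₁ * Mg ≤ 2 * (δ / (4 * Mg)) * Mg := by nlinarith
    calc 2 * ε₁ * Mg ≤ 2 * (δ / (4 * Mg)) * Mg := h2
    _ = δ / 2 := by field_simp; ring
  clear_value ε₁
  -- existence and uniqueness of the implicit root
  have hkey : ∀ x ∈ C3, ∀ e : ℝ, |e| ≤ ε₁ →
      (∃ t, t ∈ Icc (-δ) δ ∧ G (x, t, e) = 0 ∧ |t| ≤ 2 * |e * g x|) ∧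
      (∀ t₁ ∈ Icc (-δ) δ, ∀ t₂ ∈ Icc (-δ) δ, G (x, t₁, e) = 0 → G (x, t₂, e) = 0 → t₁ = t₂) := by
    intro x hx e he
    have heδ : |e| ≤ δ := he.trans hε₁δ
    set φ : ℝ → ℝ := fun t => G (x, t, e) with hφ_def
    have hd : ∀ t ∈ Icc (-δ) δ, HasDerivAt φ (q (x, t, e)) t := by
      intro t ht
      have htδ : |t| ≤ δ := abs_le.2 ⟨ht.1, ht.2⟩
      exact hqt (x, t, e) (hQ x hx t e htδ heδ).1
    have hq2 : ∀ t ∈ Icc (-δ) δ, 1/2 ≤ q (x, t, e) := by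
      intro t ht
      exact (hQ x hx t e (abs_le.2 ⟨ht.1, ht.2⟩) heδ).2
    have hφcont : ContinuousOn φ (Icc (-δ) δ) := fun t ht =>
      ((hd t ht).continuousAt).continuousWithinAt
    have hφmono : StrictMonoOn φ (Icc (-δ) δ) := by
      apply strictMonoOn_of_deriv_pos (convex_Icc _ _) hφcont
      intro t ht
      rw [interior_Icc] at ht
      have ht' : t ∈ Icc (-δ) δ := Ioo_subset_Icc_self ht
      rw [(hd t ht').deriv]
      linarith [hq2 t ht']
    set χ : ℝ → ℝ := fun t => φ t - t / 2 with hχ_def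
    have hχd : ∀ t ∈ Icc (-δ) δ, HasDerivAt χ (q (x, t, e) - 1/2) t := by
      intro t ht
      have h5 := (hd t ht).sub ((hasDerivAt_id' t).div_const 2)
      exact h5
    have hχmono : MonotoneOn χ (Icc (-δ) δ) := by
      apply monotoneOn_of_deriv_nonneg (convex_Icc _ _)
      · exact hφcont.sub ((continuous_id.div_const 2).continuousOn)
      · intro t ht
        rw [interior_Icc] at ht
        exact (hχd t (Ioo_subset_Icc_self ht)).differentiableAt.differentiableWithinAt
      · intro t ht
        rw [interior_Icc] at ht
        rw [(hχd t (Ioo_subset_Icc_self ht)).deriv]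
        linarith [hq2 t (Ioo_subset_Icc_self ht)]
    clear_value φ χ
    have hφ0 : φ 0 = e * g x := by rw [hφ_def]; simp [hG_def, hm_def]
    have hφ0b : |φ 0| ≤ δ / 4 := by
      rw [hφ0, abs_mul]
      have h1 : |e| * |g x| ≤ ε₁ * Mg :=
        mul_le_mul he (hMg x hx) (abs_nonneg _) hε₁pos.le
      linarith [hε₁Mg]
    have h0mem : (0:ℝ) ∈ Icc (-δ) δ := ⟨by linarith, by linarith⟩
    have hδmem : δ ∈ Icc (-δ) δ := ⟨by linarith, le_refl _⟩
    have hmδmem : -δ ∈ Icc (-δ) δ := ⟨le_refl _, by linarith⟩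
    obtain ⟨habs0a, habs0b⟩ := abs_le.1 hφ0b
    have hχ1 : χ 0 ≤ χ δ := hχmono h0mem hδmem (by linarith)
    have hχ2 : χ (-δ) ≤ χ 0 := hχmono hmδmem h0mem (by linarith)
    simp only [hχ_def] at hχ1 hχ2
    have hφδ : 0 ≤ φ δ := by linarith
    have hφmδ : φ (-δ) ≤ 0 := by linarith
    have hIVT := intermediate_value_Icc (by linarith : -δ ≤ δ) hφcont
    have h0img : (0:ℝ) ∈ φ '' (Icc (-δ) δ) := hIVT ⟨hφmδ, hφδ⟩
    obtain ⟨t, htI, htroot⟩ := h0img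
    constructor
    · refine ⟨t, htI, ?_, ?_⟩
      · rw [hφ_def] at htroot
        exact htroot
      rw [← hφ0]
      rcases le_or_gt 0 t with htpos | htneg
      · have h7 : χ 0 ≤ χ t := hχmono h0mem htI htpos
        simp only [hχ_def] at h7
        rw [htroot] at h7
        rw [abs_of_nonneg htpos]
        cases abs_cases (φ 0) <;> linarith
      · have h7 : χ t ≤ χ 0 := hχmono htI h0mem htneg.le
        simp only [hχ_def] at h7
        rw [htroot] at h7
        rw [abs_of_neg htneg]
        cases abs_cases (φ 0) <;> linarith
    · intro t₁ ht₁ t₂ ht₂ h₁ h₂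
      have h₁' : φ t₁ = 0 := by rw [hφ_def]; exact h₁
      have h₂' : φ t₂ = 0 := by rw [hφ_def]; exact h₂
      exact hφmono.injOn ht₁ ht₂ (h₁'.trans h₂'.symm)
  -- definition of τ
  set τ : E → ℝ → ℝ := fun x e =>
    if h : ∃ t, t ∈ Icc (-δ) δ ∧ G (x, t, e) = 0 ∧ |t| ≤ 2 * |e * g x| then h.choose else 0
    with hτ_def
  have hroot : ∀ x ∈ C3, ∀ e : ℝ, |e| ≤ ε₁ →
      τ x e ∈ Icc (-δ) δ ∧ G (x, τ x e, e) = 0 ∧ |τ x e| ≤ 2 * |e * g x| := by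
    intro x hx e he
    have hex := (hkey x hx e he).1
    rw [hτ_def]
    simp only [dif_pos hex]
    exact hex.choose_spec
  have huniq : ∀ x ∈ C3, ∀ e : ℝ, |e| ≤ ε₁ → ∀ t ∈ Icc (-δ) δ, G (x, t, e) = 0 → t = τ x e := by
    intro x hx e he t ht hr'
    have h := hroot x hx e he
    exact (hkey x hx e he).2 t ht (τ x e) h.1 hr' h.2.1
  have hτ0 : ∀ x ∈ C3, τ x 0 = 0 := by
    intro x hx
    have h0 : G (x, (0:ℝ), (0:ℝ)) = 0 := by simp [hG_def, hm_def]
    have := huniq x hx 0 (by simpa using hε₁pos.le) 0 ⟨by linarith, by linarith⟩ h0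
    exact this.symm
  have hτbound : ∀ x ∈ C3, ∀ e : ℝ, |e| ≤ ε₁ → |τ x e| ≤ 2 * |e| * Mg := by
    intro x hx e he
    have h := (hroot x hx e he).2.2
    have h2 : |e * g x| ≤ |e| * Mg := by
      rw [abs_mul]
      exact mul_le_mul_of_nonneg_left (hMg x hx) (abs_nonneg _)
    linarith
  -- the maps τt and Φt
  set τt : E × ℝ → ℝ := fun p => τ p.1 p.2 with hτt_def
  set Φt : E × ℝ → E := fun p => p.1 + τt p • v p.1 with hΦt_def
  -- smoothness of τt near C3 × small ε (via the inverse function theorem)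
  have hsmooth : ∀ x₀ ∈ T3, ∀ e₀ : ℝ, |e₀| < ε₁ → ContDiffAt ℝ (⊤ : ℕ∞) τt (x₀, e₀) := by
    intro x₀ hx₀ e₀ he₀
    have hx₀C3 : x₀ ∈ C3 := hT3C3 hx₀
    have he₀' : |e₀| ≤ ε₁ := he₀.le
    obtain ⟨hτI, hτroot, hτb⟩ := hroot x₀ hx₀C3 e₀ he₀'
    set P₀ : E × ℝ × ℝ := (x₀, τ x₀ e₀, e₀) with hP₀_def
    have hτδ2 : |τ x₀ e₀| < δ := by
      have h1 := hτbound x₀ hx₀C3 e₀ he₀'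
      have h2 : 2 * |e₀| * Mg ≤ 2 * ε₁ * Mg := by nlinarith
      linarith [hε₁Mg, hδpos]
    have hP₀D : P₀ ∈ D := (hQ x₀ hx₀C3 _ _ (abs_le.1 hτδ2.le |> fun h => abs_le.2 h)
      (he₀'.trans hε₁δ)).1
    have hq0 : (1:ℝ)/2 ≤ q P₀ :=
      (hQ x₀ hx₀C3 _ _ hτδ2.le (he₀'.trans hε₁δ)).2
    have hWc : ContDiffAt ℝ (⊤ : ℕ∞) Wm P₀ := hWsmooth.contDiffAt (hDopen.mem_nhds hP₀D)
    have hGd : HasFDerivAt G (fderiv ℝ G P₀) P₀ := hGdiff P₀ hP₀D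
    set DW : E × ℝ × ℝ →L[ℝ] E × ℝ × ℝ :=
      (ContinuousLinearMap.fst ℝ E (ℝ × ℝ)).prod ((fderiv ℝ G P₀).prod
        ((ContinuousLinearMap.snd ℝ ℝ ℝ).comp (ContinuousLinearMap.snd ℝ E (ℝ × ℝ)))) with hDW_def
    have hWd : HasFDerivAt Wm DW P₀ := by
      apply HasFDerivAt.prodMk hasFDerivAt_fst
      exact HasFDerivAt.prodMk hGd
        (((ContinuousLinearMap.snd ℝ ℝ ℝ).comp (ContinuousLinearMap.snd ℝ E (ℝ × ℝ))).hasFDerivAt)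
    have hker : ∀ z : E × ℝ × ℝ, DW z = 0 → z = 0 := by
      intro z hz
      have happ : DW z = (z.1, (fderiv ℝ G P₀ z, z.2.2)) := by
        simp [hDW_def]
      rw [happ] at hz
      rw [Prod.ext_iff, Prod.ext_iff] at hz
      simp only [Prod.fst_zero, Prod.snd_zero] at hz
      obtain ⟨h1, h2, h3⟩ := hz
      have hzeq : z = z.2.1 • (((0:E), (1:ℝ), (0:ℝ)) : E × ℝ × ℝ) := by
        rw [Prod.ext_iff, Prod.ext_iff]
        refine ⟨by simp [h1], by simp, by simp [h3]⟩
      rw [hzeq, map_smul] at h2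
      have h4 : z.2.1 * q P₀ = 0 := by simpa [hq_def, smul_eq_mul] using h2
      have hz21 : z.2.1 = 0 := by
        rcases mul_eq_zero.1 h4 with h | h
        · exact h
        · exfalso; rw [h] at hq0; linarith
      rw [hzeq, hz21, zero_smul]
    have hinjDW : Function.Injective DW := by
      intro u1 u2 h12
      have h5 : DW (u1 - u2) = 0 := by rw [map_sub, h12, sub_self]
      exact sub_eq_zero.1 (hker _ h5)
    obtain ⟨eDW, heDW⟩ := clm_equiv_of_injective DW hinjDW
    have hWe : HasFDerivAt Wm (eDW : E × ℝ × ℝ →L[ℝ] E × ℝ × ℝ) P₀ := heDW ▸ hWd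
    have h1top : ((⊤ : ℕ∞) : WithTop ℕ∞) ≠ 0 := by simp
    set ℓ : E × ℝ × ℝ → E × ℝ × ℝ := hWc.localInverse hWe h1top with hℓ_def
    have hℓsmooth : ContDiffAt ℝ (⊤ : ℕ∞) ℓ (Wm P₀) := hWc.to_localInverse hWe h1top
    have hℓP₀ : ℓ (Wm P₀) = P₀ := hWc.localInverse_apply_image hWe h1top
    have hstrict : HasStrictFDerivAt Wm (eDW : E × ℝ × ℝ →L[ℝ] E × ℝ × ℝ) P₀ :=
      hWc.hasStrictFDerivAt' hWe h1top
    have hrinv : ∀ᶠ y in 𝓝 (Wm P₀), Wm (ℓ y) = y := hstrict.eventually_right_inverse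
    have hWmP₀ : Wm P₀ = ((x₀, (0:ℝ), e₀) : E × ℝ × ℝ) := by
      simp only [hWm_def, hP₀_def]
      rw [Prod.ext_iff, Prod.ext_iff]
      exact ⟨rfl, by simpa using hτroot, rfl⟩
    set j : E × ℝ → E × ℝ × ℝ := fun p => (p.1, (0:ℝ), p.2) with hj_def
    have hj : ContDiff ℝ (⊤ : ℕ∞) j :=
      contDiff_fst.prodMk (contDiff_const.prodMk contDiff_snd)
    have hjval : j (x₀, e₀) = Wm P₀ := by rw [hWmP₀]
    set σ : E × ℝ → ℝ := fun p => (ℓ (j p)).2.1 with hσ_def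
    have hℓj : ContDiffAt ℝ (⊤ : ℕ∞) (ℓ ∘ j) (x₀, e₀) := by
      apply ContDiffAt.comp
      · rw [hjval]; exact hℓsmooth
      · exact hj.contDiffAt
    have hσsm : ContDiffAt ℝ (⊤ : ℕ∞) σ (x₀, e₀) := by
      have h5 : ContDiff ℝ (⊤ : ℕ∞) (fun z : E × ℝ × ℝ => z.2.1) := contDiff_snd.fst
      exact h5.contDiffAt.comp _ hℓj
    have hσval : σ (x₀, e₀) = τ x₀ e₀ := by
      rw [hσ_def]
      simp only [hjval, hℓP₀]
      rfl
    have hEq : τt =ᶠ[𝓝 (x₀, e₀)] σ := by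
      have ht : Filter.Tendsto j (𝓝 (x₀, e₀)) (𝓝 (Wm P₀)) := by
        rw [← hjval]
        exact hj.continuous.tendsto _
      have ev1 : ∀ᶠ p : E × ℝ in 𝓝 (x₀, e₀), Wm (ℓ (j p)) = j p := ht.eventually hrinv
      have ev2 : ∀ᶠ p : E × ℝ in 𝓝 (x₀, e₀), |σ p| < δ := by
        have hopenset : IsOpen {t : ℝ | |t| < δ} := isOpen_lt continuous_abs continuous_const
        have hmemset : σ (x₀, e₀) ∈ {t : ℝ | |t| < δ} := by rw [hσval]; exact hτδ2
        exact hσsm.continuousAt.preimage_mem_nhds (hopenset.mem_nhds hmemset)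
      have ev3 : ∀ᶠ p : E × ℝ in 𝓝 (x₀, e₀), p.1 ∈ T3 :=
        continuousAt_fst.preimage_mem_nhds (hT3open.mem_nhds hx₀)
      have ev4 : ∀ᶠ p : E × ℝ in 𝓝 (x₀, e₀), |p.2| ≤ ε₁ := by
        have hopenset : IsOpen {t : ℝ | |t| < ε₁} := isOpen_lt continuous_abs continuous_const
        have h5 : ∀ᶠ p : E × ℝ in 𝓝 (x₀, e₀), |p.2| < ε₁ :=
          continuousAt_snd.preimage_mem_nhds (hopenset.mem_nhds (by exact he₀))
        exact h5.mono fun p hp => hp.le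
      filter_upwards [ev1, ev2, ev3, ev4] with p h1 h2 h3 h4
      have hz : ℓ (j p) = ((p.1, σ p, p.2) : E × ℝ × ℝ) := by
        have hc1 : (Wm (ℓ (j p))).1 = (j p).1 := by rw [h1]
        have hc3 : (Wm (ℓ (j p))).2.2 = (j p).2.2 := by rw [h1]
        rw [Prod.ext_iff, Prod.ext_iff]
        exact ⟨hc1, rfl, hc3⟩
      have hG0 : G ((p.1, σ p, p.2) : E × ℝ × ℝ) = 0 := by
        have hc2 : (Wm (ℓ (j p))).2.1 = (j p).2.1 := by rw [h1]
        rw [hz] at hc2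
        exact hc2
      have := huniq p.1 (hT3C3 h3) p.2 h4 (σ p) ⟨by linarith [abs_le.1 h2.le], (abs_le.1 h2.le).2⟩ hG0
      exact this.symm
    exact hσsm.congr_of_eventuallyEq hEq
  -- smoothness of Φt
  have hΦsm : ∀ x₀ ∈ T3, ∀ e₀ : ℝ, |e₀| < ε₁ → ContDiffAt ℝ (⊤ : ℕ∞) Φt (x₀, e₀) := by
    intro x₀ hx₀ e₀ he₀
    apply ContDiffAt.add contDiffAt_fst
    apply ContDiffAt.smul (hsmooth x₀ hx₀ e₀ he₀)
    exact (hv.contDiffAt (hVopen.mem_nhds (hΩV (hC3Ω (hT3C3 hx₀))))).comp (x₀, e₀) contDiffAt_fst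
  -- the open set where Φt is smooth
  set O2 : Set (E × ℝ) := {p | ∃ u', IsOpen u' ∧ p ∈ u' ∧ ContDiffOn ℝ (⊤ : ℕ∞) Φt u'} with hO2_def
  have hO2open : IsOpen O2 := by
    rw [isOpen_iff_forall_mem_open]
    rintro p ⟨u', hu'o, hpu', hu's⟩
    exact ⟨u', fun y hy => ⟨u', hu'o, hy, hu's⟩, hu'o, hpu'⟩
  have hmemO2 : ∀ x₀ ∈ T3, ∀ e₀ : ℝ, |e₀| < ε₁ → ((x₀, e₀) : E × ℝ) ∈ O2 := by
    intro x₀ hx₀ e₀ he₀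
    exact ⟨T3 ×ˢ {e : ℝ | |e| < ε₁}, hT3open.prod (isOpen_lt continuous_abs continuous_const),
      ⟨hx₀, he₀⟩, fun p hp => (hΦsm p.1 hp.1 p.2 hp.2).contDiffWithinAt⟩
  set DΦ : E × ℝ → E →L[ℝ] E :=
    fun p => (fderiv ℝ Φt p).comp (ContinuousLinearMap.inl ℝ E ℝ) with hDΦ_def
  have hDΦcont : ContinuousOn DΦ O2 := by
    rintro p ⟨u', hu'o, hpu', hu'⟩
    have h1 : ContinuousOn (fderiv ℝ Φt) u' :=
      hu'.continuousOn_fderiv_of_isOpen hu'o (by simp)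
    have h2 : ContinuousAt (fderiv ℝ Φt) p := h1.continuousAt (hu'o.mem_nhds hpu')
    have h3 : Continuous (fun A : (E × ℝ) →L[ℝ] E => A.comp (ContinuousLinearMap.inl ℝ E ℝ)) :=
      continuous_id.clm_comp continuous_const
    exact (h3.continuousAt.comp h2).continuousWithinAt
  have hDid : ∀ x ∈ C2, DΦ (x, (0:ℝ)) = ContinuousLinearMap.id ℝ E := by
    intro x hx
    have hx3 : x ∈ T3 := hC2T3 hx
    have hO2x : ((x, (0:ℝ)) : E × ℝ) ∈ O2 := hmemO2 x hx3 0 (by simpa using hε₁pos)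
    obtain ⟨u', hu'o, hpu', hu'⟩ := hO2x
    have hdiffat : DifferentiableAt ℝ Φt (x, 0) :=
      (hu'.differentiableOn (by simp)).differentiableAt (hu'o.mem_nhds hpu')
    have hemb : HasFDerivAt (fun y : E => ((y, (0:ℝ)) : E × ℝ))
        (ContinuousLinearMap.inl ℝ E ℝ) x := by
      have h := (ContinuousLinearMap.inl ℝ E ℝ).hasFDerivAt (x := x)
      apply h.congr_of_eventuallyEq
      filter_upwards with y
      simp
    have hcomp : HasFDerivAt (fun y : E => Φt (y, 0)) (DΦ (x, 0)) x :=
      hdiffat.hasFDerivAt.comp (g := Φt) x hemb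
    have hidnear : (fun y : E => Φt (y, 0)) =ᶠ[𝓝 x] id := by
      filter_upwards [hT3open.mem_nhds hx3] with y hy
      have h5 : τ y 0 = 0 := hτ0 y (hT3C3 hy)
      simp [hΦt_def, hτt_def, h5]
    have hid : HasFDerivAt (fun y : E => Φt (y, 0)) (ContinuousLinearMap.id ℝ E) x :=
      (hasFDerivAt_id x).congr_of_eventuallyEq hidnear
    exact hcomp.unique hid
  -- tube bound 2 : the x-derivative of Φt is close to the identity
  obtain ⟨ε₂, hε₂pos, hε₂⟩ := tube_bound (β := ℝ) hC2comp (0:ℝ) hO2open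
    (fun x hx => hmemO2 x (hC2T3 hx) 0 (by simpa using hε₁pos)) hDΦcont one_half_pos
  have hDbound : ∀ x ∈ C2, ∀ e : ℝ, |e| ≤ ε₂ →
      ((x, e) : E × ℝ) ∈ O2 ∧ ‖DΦ (x, e) - ContinuousLinearMap.id ℝ E‖ ≤ 1/2 := by
    intro x hx e he
    have hdist : dist e (0:ℝ) ≤ ε₂ := by rwa [Real.dist_eq, sub_zero]
    obtain ⟨hmem, hd⟩ := hε₂ x hx e hdist
    refine ⟨hmem, ?_⟩
    rw [dist_eq_norm, hDid x hx] at hd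
    exact hd
  -- final choice of ε
  set ε : ℝ := min (min ε₂ (ε₁/2)) (r / (8 * Mg * Mv)) with hε_def
  have hεpos : 0 < ε := lt_min (lt_min hε₂pos (by positivity)) (by positivity)
  have hεε₂ : ε ≤ ε₂ := (min_le_left _ _).trans (min_le_left _ _)
  have hεε₁ : ε < ε₁ := lt_of_le_of_lt ((min_le_left _ _).trans (min_le_right _ _)) (by linarith)
  have hεr : ε ≤ r / (8 * Mg * Mv) := min_le_right _ _
  have hεabs : |ε| ≤ ε₁ := by rw [abs_of_pos hεpos]; exact hεε₁.le
  have hεabs₂ : |ε| ≤ ε₂ := by rw [abs_of_pos hεpos]; exact hεε₂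
  have hεabs' : |ε| < ε₁ := by rw [abs_of_pos hεpos]; exact hεε₁
  have hεr' : ε * (8 * Mg * Mv) ≤ r := by
    rw [le_div_iff₀ (by positivity)] at hεr
    linarith [hεr]
  clear_value ε
  -- the displacement is small
  have hmove : ∀ x ∈ C3, ‖Φt (x, ε) - x‖ < r / 2 := by
    intro x hx
    have h1 : Φt (x, ε) - x = τ x ε • v x := by
      simp [hΦt_def, hτt_def]
    rw [h1, norm_smul]
    have h2 : |τ x ε| ≤ 2 * |ε| * Mg := hτbound x hx ε hεabs
    have h3 : ‖v x‖ ≤ Mv := hMv x hx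
    have h4 : |ε| = ε := abs_of_pos hεpos
    have h5 : ε * (8 * Mg * Mv) ≤ r := hεr'
    calc ‖τ x ε‖ * ‖v x‖ = |τ x ε| * ‖v x‖ := by rw [Real.norm_eq_abs]
    _ ≤ (2 * |ε| * Mg) * Mv := by
        apply mul_le_mul h2 h3 (norm_nonneg _)
        positivity
    _ = 2 * ε * Mg * Mv := by rw [h4]
    _ < r / 2 := by nlinarith
  -- the map φm
  set φm : E → E := fun y => Φt (y, ε) with hφm_def
  have hembε : ∀ y : E, HasFDerivAt (fun y : E => ((y, ε) : E × ℝ))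
      (ContinuousLinearMap.inl ℝ E ℝ) y := by
    intro y
    have h1 : HasFDerivAt (fun y : E => ((y, ε) : E × ℝ))
        ((ContinuousLinearMap.id ℝ E).prod (0 : E →L[ℝ] ℝ)) y :=
      (hasFDerivAt_id y).prodMk (hasFDerivAt_const ε y)
    have h2 : (ContinuousLinearMap.id ℝ E).prod (0 : E →L[ℝ] ℝ)
        = ContinuousLinearMap.inl ℝ E ℝ := by
      ext z <;> simp
    rwa [h2] at h1
  have hgoodC2 : ∀ y ∈ C2, HasFDerivAt φm (DΦ (y, ε)) y ∧
      ‖DΦ (y, ε) - ContinuousLinearMap.id ℝ E‖ ≤ 1/2 := by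
    intro y hy
    obtain ⟨hmem, hb⟩ := hDbound y hy ε hεabs₂
    obtain ⟨u', hu'o, hpu', hu'⟩ := hmem
    have hdiffat : DifferentiableAt ℝ Φt (y, ε) :=
      (hu'.differentiableOn (by simp)).differentiableAt (hu'o.mem_nhds hpu')
    exact ⟨hdiffat.hasFDerivAt.comp (g := Φt) y (hembε y), hb⟩
  have hsm : ∀ y ∈ T1, ContDiffAt ℝ (⊤ : ℕ∞) φm y := by
    intro y hy
    exact (hΦsm y (hT1T3 hy) ε hεabs').comp y (contDiffAt_id.prodMk contDiffAt_const)
  -- Lipschitz bound for the displacement on close pairs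
  have hlip : ∀ x ∈ T1, ∀ y ∈ T1, dist y x ≤ r →
      ‖(φm y - y) - (φm x - x)‖ ≤ 1/2 * ‖y - x‖ := by
    intro x hx y hy hxy
    set hdisp : E → E := fun z => φm z - z with hdisp_def
    have hsC2 : segment ℝ x y ⊆ C2 := by
      intro z hz
      have h1 : segment ℝ x y ⊆ closedBall x r := by
        apply (convex_closedBall x r).segment_subset
        · simp [hr.le]
        · rwa [mem_closedBall]
      exact hseg x hx z (by simpa [mem_closedBall] using h1 hz)
    have hmvt := Convex.norm_image_sub_le_of_norm_hasFDerivWithin_le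
      (f := hdisp) (f' := fun z => DΦ (z, ε) - ContinuousLinearMap.id ℝ E)
      (fun z hz => (((hgoodC2 z (hsC2 hz)).1.sub (hasFDerivAt_id z)).hasFDerivWithinAt))
      (fun z hz => (hgoodC2 z (hsC2 hz)).2) (convex_segment x y)
      (left_mem_segment ℝ x y) (right_mem_segment ℝ x y)
    simpa [hdisp_def] using hmvt
  -- injectivity on T1
  have hinj : Set.InjOn φm T1 := by
    intro x hx y hy hxy
    rcases le_or_gt (dist y x) r with hle | hlt
    · have h1 := hlip x hx y hy hle
      have h2 : (φm y - y) - (φm x - x) = x - y := by rw [hxy]; abel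
      rw [h2] at h1
      have h3 : ‖x - y‖ = ‖y - x‖ := norm_sub_rev _ _
      rw [h3] at h1
      have h4 : ‖y - x‖ = 0 := by linarith [norm_nonneg (y - x)]
      have h5 : y - x = 0 := norm_eq_zero.1 h4
      have := sub_eq_zero.1 h5
      exact this.symm
    · exfalso
      have h1 := hmove x (hT1C3 hx)
      have h2 := hmove y (hT1C3 hy)
      have h3 : dist y x ≤ dist y (φm y) + dist (φm y) x := dist_triangle _ _ _
      have h4 : dist (φm y) x = dist (φm x) x := by rw [hxy]
      have h5 : dist y (φm y) = ‖Φt (y, ε) - y‖ := by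
        rw [dist_comm, dist_eq_norm]
      have h6 : dist (φm x) x = ‖Φt (x, ε) - x‖ := by
        rw [dist_eq_norm]
      rw [h4, h5, h6] at h3
      linarith
  -- invertibility of the derivative
  have hder' : ∀ y ∈ T1, ∃ eq : E ≃L[ℝ] E, (eq : E →L[ℝ] E) = DΦ (y, ε) := by
    intro y hy
    exact clm_equiv_of_injective _ (clm_injective_of_close_id _ (hgoodC2 y (hT1C2 hy)).2)
  -- φm is an open map on open subsets of T1
  have hopenmap : ∀ W' : Set E, W' ⊆ T1 → IsOpen W' → IsOpen (φm '' W') := by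
    intro W' hW'T hW'o
    rw [isOpen_iff_forall_mem_open]
    rintro y₀ ⟨x₀, hx₀W, rfl⟩
    obtain ⟨eq, heq⟩ := hder' x₀ (hW'T hx₀W)
    have hfd : HasFDerivAt φm (eq : E →L[ℝ] E) x₀ :=
      heq ▸ (hgoodC2 x₀ (hT1C2 (hW'T hx₀W))).1
    set Ψ := (hsm x₀ (hW'T hx₀W)).toOpenPartialHomeomorph φm hfd (by simp) with hΨ_def
    have hΨcoe : (Ψ : E → E) = φm := ContDiffAt.toOpenPartialHomeomorph_coe _ _ _
    refine ⟨Ψ '' (W' ∩ Ψ.source), ?_, ?_, ?_⟩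
    · rintro z ⟨x, hx, rfl⟩
      exact ⟨x, hx.1, by rw [← hΨcoe]⟩
    · exact Ψ.isOpen_image_of_subset_source (hW'o.inter Ψ.open_source) inter_subset_right
    · refine ⟨x₀, ⟨hx₀W, ?_⟩, ?_⟩
      · exact ContDiffAt.mem_toOpenPartialHomeomorph_source _ _ _
      · rw [hΨcoe]
  -- assembling the partial homeomorphism
  haveI : Nonempty E := ⟨0⟩
  have hcont : ContinuousOn φm T1 := fun y hy => ((hsm y hy).continuousAt).continuousWithinAt
  have hopenres : IsOpenMap (T1.restrict φm) := by
    intro O1 hO1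
    rw [isOpen_induced_iff] at hO1
    obtain ⟨O₂, hO₂, rfl⟩ := hO1
    have himg : T1.restrict φm '' (Subtype.val ⁻¹' O₂) = φm '' (O₂ ∩ T1) := by
      ext z
      constructor
      · rintro ⟨⟨y, hyT⟩, hyO, rfl⟩
        exact ⟨y, ⟨hyO, hyT⟩, rfl⟩
      · rintro ⟨y, ⟨hyO, hyT⟩, rfl⟩
        exact ⟨⟨y, hyT⟩, hyO, rfl⟩
    rw [himg]
    exact hopenmap _ inter_subset_right (hO₂.inter hT1open)
  set Φph : PartialHomeomorph E E := (OpenPartialHomeomorph.ofContinuousOpenRestrict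
    (Set.InjOn.toPartialEquiv φm T1 hinj) hcont hopenres hT1open).toPartialHomeomorph with hΦph_def
  have hΦfun : (Φph : E → E) = φm := rfl
  have hΦsource : Φph.source = T1 := rfl
  refine ⟨ε, hεpos, Φph, ?_, ?_, ?_, ?_, ?_⟩
  · rw [hΦsource]; exact hKT1
  · rintro z ⟨x, hxK, rfl⟩
    have hx1 : x ∈ T1 := hKT1 hxK
    have h1 := hmove x (hT1C3 hx1)
    have h2 : (Φph : E → E) x ∈ thickening r K := by
      rw [mem_thickening_iff]
      refine ⟨x, hxK, ?_⟩
      rw [hΦfun, dist_eq_norm]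
      calc ‖φm x - x‖ = ‖Φt (x, ε) - x‖ := rfl
      _ < r / 2 := h1
      _ < r := by linarith
    exact hC3Ω (hT3C3 (thickening_mono (by linarith) K h2))
  · intro y hy
    rw [hΦsource] at hy
    exact ((hsm y hy).congr_of_eventuallyEq (by
      filter_upwards with z; rw [hΦfun])).contDiffWithinAt
  · intro y hy
    have hyT : y ∈ Φph.target := hy
    have hxs : Φph.symm y ∈ Φph.source := Φph.map_target hyT
    have hxT1 : Φph.symm y ∈ T1 := by rwa [hΦsource] at hxs
    obtain ⟨eq, heq⟩ := hder' _ hxT1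
    have hfd : HasFDerivAt (Φph : E → E) (eq : E →L[ℝ] E) (Φph.symm y) := by
      rw [hΦfun]
      exact heq ▸ (hgoodC2 _ (hT1C2 hxT1)).1
    have hcd : ContDiffAt ℝ (⊤ : ℕ∞) (Φph : E → E) (Φph.symm y) := by
      have h5 := hsm _ hxT1
      exact h5.congr_of_eventuallyEq (by filter_upwards with z; rw [hΦfun])
    exact ((OpenPartialHomeomorph.ofContinuousOpenRestrict
      (Set.InjOn.toPartialEquiv φm T1 hinj) hcont hopenres hT1open).contDiffAt_symm hyT hfd hcd).contDiffWithinAt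
  · intro x hxK
    have hxT1 : x ∈ T1 := hKT1 hxK
    have hxC3 : x ∈ C3 := hT1C3 hxT1
    have hroot' := (hroot x hxC3 ε hεabs).2.1
    have hΦx : (Φph : E → E) x = x + τ x ε • v x := rfl
    rw [hΦx]
    have hGval : G ((x, τ x ε, ε) : E × ℝ × ℝ)
        = f (x + τ x ε • v x) + ε * g (x + τ x ε • v x) - f x := rfl
    rw [hGval] at hroot'
    linarith

theorem stmt_7 (n : ℕ) (Ω' U : Set (EuclideanSpace ℝ (Fin n)))
    (hΩo : IsOpen Ω') (hΩb : Bornology.IsBounded Ω')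
    (hU : IsOpen U) (hcl : closure Ω' ⊆ U)
    (f g : EuclideanSpace ℝ (Fin n) → ℝ)
    (hf : ContDiffOn ℝ (⊤ : ℕ∞) f U) (hg : ContDiffOn ℝ (⊤ : ℕ∞) g U)
    (hcrit : ∀ x ∈ closure Ω', fderiv ℝ f x ≠ 0)
    (K : Set (EuclideanSpace ℝ (Fin n))) (hK : IsCompact K) (hKΩ : K ⊆ Ω') :
    ∃ ε : ℝ, 0 < ε ∧
      ∃ Φ : PartialHomeomorph (EuclideanSpace ℝ (Fin n)) (EuclideanSpace ℝ (Fin n)),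
        K ⊆ Φ.source ∧ Φ '' K ⊆ Ω' ∧
        ContDiffOn ℝ (⊤ : ℕ∞) Φ Φ.source ∧ ContDiffOn ℝ (⊤ : ℕ∞) Φ.symm Φ.target ∧
        ∀ x ∈ K, f (Φ x) + ε * g (Φ x) = f x :=
  moser_aux Ω' U hΩo hΩb hU hcl f g hf hg hcrit K hK hKΩ
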